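/- arXiv:0809.3110 — 3 statements merged into one kernel-verified Lean document; each statement's English description precedes it below -/
import Mathlib

section
/- For words g₁, g₂ in H = F/F₃: ν(g₁ α g₂ α⁻¹) = b(g₂) + ν(g₁g₂) and ν(g₁ β g₂ β⁻¹) = -a(g₂) + ν(g₁g₂). -/
/-! Common setup: free group on two generators, Heisenberg group of unipotent
upper-triangular 3×3 integer matrices, the Heisenberg invariant. -/

noncomputable section

open scoped commutatorElement

/-- The free group on two generators. -/
abbrev F : Type := FreeGroup Bool

/-- The generator `α` of the free group. -/
def Wα : F := FreeGroup.of false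

/-- The generator `β` of the free group. -/
def Wβ : F := FreeGroup.of true

/-- `F₃`, the third term of the lower central series `F₁ = F`, `F_{n+1} = [F, Fₙ]`
(Mathlib's `lowerCentralSeries` is 0-indexed). -/
abbrev F₃ : Subgroup F := (⊤ : Subgroup F).lowerCentralSeries 2

/-- `H = F/F₃`. -/
abbrev H : Type := F ⧸ F₃

/-- The unipotent upper-triangular matrix `M(a,b,c)`. -/
def Mmat (a b c : ℤ) : Matrix (Fin 3) (Fin 3) ℤ := !![1, a, c; 0, 1, b; 0, 0, 1]

theorem Mmat_mul (a b c a' b' c' : ℤ) :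
    Mmat a b c * Mmat a' b' c' = Mmat (a + a') (b + b') (c + c' + a * b') := by
  simp [Mmat, Matrix.mul_fin_three]; ring_nf <;> simp

theorem Mmat_zero : Mmat 0 0 0 = 1 := by
  simp [Mmat, Matrix.one_fin_three]

/-- `M(a,b,c)` as a unit of the matrix ring. -/
def Munit (a b c : ℤ) : (Matrix (Fin 3) (Fin 3) ℤ)ˣ :=
  ⟨Mmat a b c, Mmat (-a) (-b) (a * b - c),
    by rw [Mmat_mul]; rw [show a + -a = 0 by ring, show b + -b = 0 by ring,
      show c + (a*b - c) + a * (-b) = 0 by ring]; exact Mmat_zero,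
    by rw [Mmat_mul]; rw [show -a + a = 0 by ring, show -b + b = 0 by ring,
      show (a*b - c) + c + (-a) * b = 0 by ring]; exact Mmat_zero⟩

theorem Munit_mul (a b c a' b' c' : ℤ) :
    Munit a b c * Munit a' b' c' = Munit (a + a') (b + b') (c + c' + a * b') :=
  Units.ext (Mmat_mul a b c a' b' c')

theorem Munit_one : Munit 0 0 0 = 1 := Units.ext Mmat_zero

theorem Munit_inv (a b c : ℤ) : (Munit a b c)⁻¹ = Munit (-a) (-b) (a * b - c) :=
  Units.ext rfl

theorem Munit_congr {a b c a' b' c' : ℤ} (h1 : a = a') (h2 : b = b') (h3 : c = c') :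
    Munit a b c = Munit a' b' c' := by subst h1; subst h2; subst h3; rfl

/-- The integer Heisenberg group, as the subgroup of units of the `3×3` integer
matrix ring consisting of the unipotent upper-triangular matrices `M(a,b,c)`. -/
def Heis : Subgroup (Matrix (Fin 3) (Fin 3) ℤ)ˣ where
  carrier := {x | ∃ a b c : ℤ, x = Munit a b c}
  one_mem' := ⟨0, 0, 0, Munit_one.symm⟩
  mul_mem' := by
    rintro x y ⟨a, b, c, rfl⟩ ⟨a', b', c', rfl⟩
    exact ⟨_, _, _, Munit_mul a b c a' b' c'⟩
  inv_mem' := by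
    rintro x ⟨a, b, c, rfl⟩
    exact ⟨_, _, _, Munit_inv a b c⟩

/-- The homomorphism `Ψ : F → ℍ` with `Ψ(α) = M(1,0,0)` and `Ψ(β) = M(0,1,0)`. -/
def Ψ : F →* (Matrix (Fin 3) (Fin 3) ℤ)ˣ :=
  FreeGroup.lift fun x => if x then Munit 0 1 0 else Munit 1 0 0

theorem Ψ_mem (g : F) : Ψ g ∈ Heis := by
  induction g using FreeGroup.induction_on with
  | C1 => exact Heis.one_mem
  | of x => cases x <;> · show Ψ (FreeGroup.of _) ∈ Heis; rw [Ψ, FreeGroup.lift_apply_of]; exact ⟨_, _, _, rfl⟩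
  | inv_of x hx => rw [map_inv]; exact Heis.inv_mem hx
  | mul x y hx hy => rw [map_mul]; exact Heis.mul_mem hx hy

theorem Munit_commutator (a b c a' b' c' : ℤ) :
    ⁅Munit a b c, Munit a' b' c'⁆ = Munit 0 0 (a * b' - a' * b) := by
  rw [commutatorElement_def, Munit_inv, Munit_inv, Munit_mul, Munit_mul, Munit_mul]
  exact Munit_congr (by ring) (by ring) (by ring)

theorem Munit_central (z a b c : ℤ) : Munit 0 0 z * Munit a b c = Munit a b c * Munit 0 0 z := by
  rw [Munit_mul, Munit_mul]; exact Munit_congr (by ring) (by ring) (by ring)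

theorem Heis_comm_central (g : F) (hg : g ∈ (⁅(⊤ : Subgroup F), ⊤⁆ : Subgroup F)) :
    Ψ g ∈ Subgroup.centralizer (Heis : Set (Matrix (Fin 3) (Fin 3) ℤ)ˣ) := by
  have hle : (⁅(⊤ : Subgroup F), ⊤⁆ : Subgroup F) ≤
      Subgroup.comap Ψ (Subgroup.centralizer (Heis : Set (Matrix (Fin 3) (Fin 3) ℤ)ˣ)) := by
    rw [Subgroup.commutator_le]
    intro g₁ _ g₂ _
    rw [Subgroup.mem_comap, map_commutatorElement]
    obtain ⟨a, b, c, h1⟩ := Ψ_mem g₁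
    obtain ⟨a', b', c', h2⟩ := Ψ_mem g₂
    rw [h1, h2, Munit_commutator]
    rw [Subgroup.mem_centralizer_iff]
    rintro x ⟨p, q, r, rfl⟩
    exact (Munit_central _ _ _ _).symm
  exact hle hg

theorem F₃_le_ker : F₃ ≤ Ψ.ker := by
  show ⁅(⁅(⊤ : Subgroup F), ⊤⁆ : Subgroup F), ⊤⁆ ≤ Ψ.ker
  rw [Subgroup.commutator_le]
  intro g hg h _
  rw [MonoidHom.mem_ker, map_commutatorElement]
  have hc : Ψ h * Ψ g = Ψ g * Ψ h :=
    Subgroup.mem_centralizer_iff.mp (Heis_comm_central g hg) (Ψ h) (Ψ_mem h)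
  rw [commutatorElement_def, ← hc]
  group

/-- The induced homomorphism `ψ : H = F/F₃ → ℍ`. -/
def ψH : H →* Heis :=
  QuotientGroup.lift F₃ (Ψ.codRestrict Heis Ψ_mem)
    (fun g hg => by
      have : Ψ g = 1 := F₃_le_ker hg
      exact Subtype.ext (by simpa using this))

/-- The matrix of the image of `g ∈ H` in the Heisenberg group. -/
def mat (g : H) : Matrix (Fin 3) (Fin 3) ℤ := ((ψH g : (Matrix (Fin 3) (Fin 3) ℤ)ˣ) : Matrix (Fin 3) (Fin 3) ℤ)

/-- `a(g)`: the exponent sum of `α` in `g` (the `(0,1)` entry of the Heisenberg matrix). -/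
def aH (g : H) : ℤ := mat g 0 1

/-- `b(g)`: the exponent sum of `β` in `g` (the `(1,2)` entry of the Heisenberg matrix). -/
def bH (g : H) : ℤ := mat g 1 2

/-- The Heisenberg invariant `ν(g)` of `g ∈ H`: the exponent of the central element
`[α,β]` in the unique normal form `g = [α,β]^ν α^a β^b`. -/
def νH (g : H) : ℤ := mat g 0 2 - aH g * bH g

/-- `a(g)` for a word `g` in the free group. -/
def aF (g : F) : ℤ := aH (QuotientGroup.mk g)

/-- `b(g)` for a word `g` in the free group. -/
def bF (g : F) : ℤ := bH (QuotientGroup.mk g)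

/-- The Heisenberg invariant of a word in the free group: the Heisenberg invariant of its
image in `H = F/F₃`. -/
def νF (g : F) : ℤ := νH (QuotientGroup.mk g)

/-! Read through `ψH` in the integer Heisenberg group, `ν(gh) = ν(g) + ν(h) - a(h) b(g)`, and
conjugating `g` by `x` multiplies it by the central commutator `[x, g]`, whose `ν` is
`a(x) b(g) - a(g) b(x)`. Taking `x = α` and `x = β` gives the two identities. -/

local notation "GL₃ℤ" => (Matrix (Fin 3) (Fin 3) ℤ)ˣ

section Coordinates

variable {g : H} {a b c : ℤ}

theorem aH_eq_of_coe_ψH (h : (ψH g : GL₃ℤ) = Munit a b c) : aH g = a := by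
  simp [aH, mat, h, Munit, Mmat]

theorem bH_eq_of_coe_ψH (h : (ψH g : GL₃ℤ) = Munit a b c) : bH g = b := by
  simp [bH, mat, h, Munit, Mmat]

theorem νH_eq_of_coe_ψH (h : (ψH g : GL₃ℤ) = Munit a b c) : νH g = c - a * b := by
  rw [νH, aH_eq_of_coe_ψH h, bH_eq_of_coe_ψH h]
  simp [mat, h, Munit, Mmat]

end Coordinates

theorem coe_ψH (g : H) : (ψH g : GL₃ℤ) = Munit (aH g) (bH g) (νH g + aH g * bH g) := by
  obtain ⟨a, b, c, h⟩ := (ψH g).2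
  rw [h, aH_eq_of_coe_ψH h, bH_eq_of_coe_ψH h, νH_eq_of_coe_ψH h, sub_add_cancel]

theorem νH_mul (g h : H) : νH (g * h) = νH g + νH h - aH h * bH g := by
  have hgh : (ψH (g * h) : GL₃ℤ) = Munit (aH g + aH h) (bH g + bH h)
      (νH g + aH g * bH g + (νH h + aH h * bH h) + aH g * bH h) := by
    rw [map_mul, Subgroup.coe_mul, coe_ψH g, coe_ψH h, Munit_mul]
  rw [νH_eq_of_coe_ψH hgh]
  ring

theorem coe_ψH_conj (x g : H) : (ψH (x * g * x⁻¹) : GL₃ℤ) =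
    Munit (aH g) (bH g) (νH g + aH g * bH g + aH x * bH g - aH g * bH x) := by
  rw [map_mul, map_mul, map_inv, Subgroup.coe_mul, Subgroup.coe_mul, Subgroup.coe_inv,
    coe_ψH x, coe_ψH g, Munit_inv, Munit_mul, Munit_mul]
  exact Munit_congr (by ring) (by ring) (by ring)

theorem aH_conj (x g : H) : aH (x * g * x⁻¹) = aH g :=
  aH_eq_of_coe_ψH (coe_ψH_conj x g)

theorem νH_conj (x g : H) : νH (x * g * x⁻¹) = νH g + aH x * bH g - aH g * bH x := by
  rw [νH_eq_of_coe_ψH (coe_ψH_conj x g)]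
  ring

theorem νH_mul_conj (g₁ x g₂ : H) :
    νH (g₁ * x * g₂ * x⁻¹) = aH x * bH g₂ - aH g₂ * bH x + νH (g₁ * g₂) := by
  rw [mul_assoc g₁, mul_assoc g₁, νH_mul, νH_conj, aH_conj, νH_mul]
  ring

theorem coe_ψH_mk_Wα : (ψH (QuotientGroup.mk Wα) : GL₃ℤ) = Munit 1 0 0 := by
  show Ψ Wα = _
  simp [Ψ, Wα]

theorem coe_ψH_mk_Wβ : (ψH (QuotientGroup.mk Wβ) : GL₃ℤ) = Munit 0 1 0 := by
  show Ψ Wβ = _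
  simp [Ψ, Wβ]

/-- for `g₁, g₂ ∈ H = F/F₃`:
`ν(g₁ α g₂ α⁻¹) = b(g₂) + ν(g₁g₂)` and `ν(g₁ β g₂ β⁻¹) = -a(g₂) + ν(g₁g₂)`. -/
theorem statement_10 (g₁ g₂ : H) :
    νH (g₁ * (QuotientGroup.mk Wα : H) * g₂ * (QuotientGroup.mk Wα : H)⁻¹) =
      bH g₂ + νH (g₁ * g₂) ∧
    νH (g₁ * (QuotientGroup.mk Wβ : H) * g₂ * (QuotientGroup.mk Wβ : H)⁻¹) =
      -(aH g₂) + νH (g₁ * g₂) := by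
  rw [νH_mul_conj, νH_mul_conj, aH_eq_of_coe_ψH coe_ψH_mk_Wα, bH_eq_of_coe_ψH coe_ψH_mk_Wα,
    aH_eq_of_coe_ψH coe_ψH_mk_Wβ, bH_eq_of_coe_ψH coe_ψH_mk_Wβ]
  constructor <;> ring

end
end

section
/- Let g = l₁l₂⋯l_n be a word in the letters α, α⁻¹, β, β⁻¹ and let w(0,i) denote the prefix l₁⋯l_{i-1}. Then the Heisenberg invariant of g equals Σ_{i : l_i = α⁻¹} b(w(0,i)) − Σ_{j : l_j = α} b(w(0,j)), where b(w) is the exponent sum of β in w. -/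
/-! Common setup: free group on two generators, Heisenberg group of unipotent
upper-triangular 3×3 integer matrices, the Heisenberg invariant. -/

noncomputable section

open scoped commutatorElement

/-! Words in the letters α, α⁻¹, β, β⁻¹ and foldings (RNA secondary structures). -/

/-- A letter is a pair `(x, s)` (the `FreeGroup` convention): `s = true` for a generator,
`s = false` for its inverse. -/
abbrev Letter : Type := Bool × Bool

/-- A word in the letters `α`, `α⁻¹`, `β`, `β⁻¹`. -/
abbrev Word : Type := List Letter

/-- The letter `α`. -/
def lα : Letter := (false, true)
/-- The letter `α⁻¹`. -/
def lαinv : Letter := (false, false)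
/-- The letter `β`. -/
def lβ : Letter := (true, true)
/-- The letter `β⁻¹`. -/
def lβinv : Letter := (true, false)

/-- The exponent sum of `α` in a word: #`α` − #`α⁻¹`. -/
def aw (w : Word) : ℤ := (w.count lα : ℤ) - (w.count lαinv : ℤ)

/-- The exponent sum of `β` in a word: #`β` − #`β⁻¹`. -/
def bw (w : Word) : ℤ := (w.count lβ : ℤ) - (w.count lβinv : ℤ)

/-- The cyclic subword `w(i,j)` strictly between positions `i` and `j` (`0`-indexed),
read counterclockwise: if `i < j` it is `l_{i+1} ⋯ l_{j-1}`, and if `i > j` it is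
`l_{i+1} ⋯ l_n l_1 ⋯ l_{j-1}` (0-indexed: wraps around the end). -/
def between (w : Word) (i j : ℕ) : Word :=
  if i < j then (w.drop (i + 1)).take (j - i - 1) else w.drop (i + 1) ++ w.take j

/-- A folding (RNA secondary structure without pseudo-knots) of the cyclic word `w`:
a collection of disjoint pairs `(i,j)` of positions with `l_i ∈ {α, β}` and `l_j` the
inverse letter, subject to the non-nesting (no pseudo-knot) condition. -/
structure Folding (w : Word) where
  /-- The set of paired positions. -/
  pairs : Finset (Fin w.length × Fin w.length)
  ne : ∀ p ∈ pairs, p.1 ≠ p.2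
  matched : ∀ p ∈ pairs,
    (w.get p.1 = lα ∧ w.get p.2 = lαinv) ∨ (w.get p.1 = lβ ∧ w.get p.2 = lβinv)
  disjoint : ∀ p ∈ pairs, ∀ q ∈ pairs, p ≠ q →
    p.1 ≠ q.1 ∧ p.1 ≠ q.2 ∧ p.2 ≠ q.1 ∧ p.2 ≠ q.2
  nonnested : ∀ p ∈ pairs, ∀ q ∈ pairs,
    (p.1 < q.1 ∧ q.1 < p.2 → p.1 < q.2 ∧ q.2 < p.2) ∧
    (p.2 < q.1 ∧ q.1 < p.1 → p.2 < q.2 ∧ q.2 < p.1)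

/-- A complete `α`-folding: every pair is an `α`-pair and every occurrence of the
letter `α` is paired. -/
def Folding.IsCompleteAlpha {w : Word} (𝓕 : Folding w) : Prop :=
  (∀ p ∈ 𝓕.pairs, w.get p.1 = lα) ∧
    ∀ i : Fin w.length, w.get i = lα → ∃ p ∈ 𝓕.pairs, p.1 = i

/-! Under `Ψ` a word `w` goes to `M(a(w), b(w), c(w))`, so `ν(w) = c(w) - a(w) b(w)`.
Appending a letter `l` multiplies by `M(a(l), b(l), 0)`, which adds `a(w) b(l)` to the
corner entry; since every letter has `a(l) b(l) = 0`, this gives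
`ν(w l) = ν(w) - a(l) b(w)`. Only the letters `α` and `α⁻¹` contribute, with
`-b` and `+b` of the preceding prefix. -/

theorem List.sum_take_get_append_singleton {α M : Type*} [AddCommMonoid M]
    (f : List α → α → M) (w : List α) (x : α) :
    ∑ i : Fin (w ++ [x]).length, f ((w ++ [x]).take i) ((w ++ [x]).get i) =
      ∑ i : Fin w.length, f (w.take i) (w.get i) + f w x := by
  rw [← (finCongr (by simp : w.length + 1 = (w ++ [x]).length)).sum_comp,
    Fin.sum_univ_castSucc]
  congr 1
  · refine Finset.sum_congr rfl fun i _ => ?_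
    simp [List.take_append_of_le_length i.isLt.le, List.getElem_append_left i.isLt]
  · simp

theorem aw_append (u v : Word) : aw (u ++ v) = aw u + aw v := by
  simp only [aw, List.count_append]; push_cast; ring

theorem bw_append (u v : Word) : bw (u ++ v) = bw u + bw v := by
  simp only [bw, List.count_append]; push_cast; ring

theorem aw_singleton_mul_bw_singleton (l : Letter) : aw [l] * bw [l] = 0 := by
  rcases l with ⟨_ | _, _ | _⟩ <;> decide

theorem ite_lαinv_sub_ite_lα (l : Letter) (b : ℤ) :
    ((if l = lαinv then b else 0) - if l = lα then b else 0) = -(aw [l] * b) := by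
  rcases l with ⟨_ | _, _ | _⟩ <;> simp [aw, lα, lαinv]

theorem Ψ_mk_singleton (l : Letter) : Ψ (FreeGroup.mk [l]) = Munit (aw [l]) (bw [l]) 0 := by
  rcases l with ⟨_ | _, _ | _⟩ <;>
    simp [Ψ, FreeGroup.lift_mk, Munit_inv, aw, bw, lα, lαinv, lβ, lβinv]

theorem νF_eq_of_Ψ_eq {g : F} {a b c : ℤ} (h : Ψ g = Munit a b c) : νF g = c - a * b := by
  have hmat : mat (QuotientGroup.mk g) = Mmat a b c := congrArg Units.val h
  unfold νF νH aH bH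
  rw [hmat]
  simp [Mmat]

theorem Ψ_mk_eq_Munit (w : Word) :
    Ψ (FreeGroup.mk w) = Munit (aw w) (bw w)
      (aw w * bw w - ∑ i : Fin w.length, aw [w.get i] * bw (w.take i)) := by
  induction w using List.reverseRecOn with
  | nil => exact Munit_one.symm
  | append_singleton w l ih =>
    rw [← FreeGroup.mul_mk, map_mul, ih, Ψ_mk_singleton, Munit_mul,
      List.sum_take_get_append_singleton (fun u l => aw [l] * bw u), aw_append, bw_append]
    refine Munit_congr rfl rfl ?_
    linear_combination -aw_singleton_mul_bw_singleton l

/-- for a word `g = l₁⋯l_n` in the letters `α, α⁻¹, β, β⁻¹` (0-indexed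
here, so the prefix `w(0,i)` of letters preceding `l_i` is `w.take i`), the Heisenberg
invariant of `g` equals
`Σ_{i : l_i = α⁻¹} b(w(0,i)) − Σ_{j : l_j = α} b(w(0,j))`. -/
theorem statement_11 (w : Word) :
    νF (FreeGroup.mk w) =
      (∑ i ∈ Finset.univ.filter (fun i : Fin w.length => w.get i = lαinv),
        bw (w.take (i : ℕ))) -
      (∑ j ∈ Finset.univ.filter (fun j : Fin w.length => w.get j = lα),
        bw (w.take (j : ℕ))) := by
  rw [νF_eq_of_Ψ_eq (Ψ_mk_eq_Munit w), Finset.sum_filter, Finset.sum_filter,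
    ← Finset.sum_sub_distrib]
  simp only [ite_lαinv_sub_ite_lα, Finset.sum_neg_distrib]
  ring

end
end

section
/- Under the Magnus expansion homomorphism M : F → ℤ⟨⟨X,Y⟩⟩ determined by M(α) = 1 + X and M(β) = 1 + Y, for any g ∈ F the coefficient of X in M(g) equals a(g) and the coefficient of Y equals b(g); moreover if a(g) = b(g) = 0 then the degree-2 part of M(g) equals ν(g)(XY − YX). -/
/-! Common setup: free group on two generators, Heisenberg group of unipotent
upper-triangular 3×3 integer matrices, the Heisenberg invariant. -/

noncomputable section

open scoped commutatorElement

/-! The Magnus expansion. Since Mathlib does not have power series in non-commuting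
variables, we work in the quotient of the ring ℤ⟨X,Y⟩ of non-commutative polynomials by
the (two-sided) ideal generated by the monomials of degree 3; coefficients in degree ≤ 2
are unaffected by this truncation, and the group of units receives `1 + X` and `1 + Y`. -/

/-- The relation killing all degree-3 monomials in ℤ⟨X,Y⟩ = `FreeAlgebra ℤ Bool`. -/
def cubeRel : FreeAlgebra ℤ Bool → FreeAlgebra ℤ Bool → Prop := fun x y =>
  (∃ i j k : Bool, x = FreeAlgebra.ι ℤ i * FreeAlgebra.ι ℤ j * FreeAlgebra.ι ℤ k) ∧ y = 0

/-- The ring ℤ⟨X,Y⟩ truncated in degrees ≥ 3. -/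
abbrev TruncAlg : Type := RingQuot cubeRel

/-- The images of the generators. -/
def gen (i : Bool) : TruncAlg := RingQuot.mkRingHom cubeRel (FreeAlgebra.ι ℤ i)

/-- The variable `X` (corresponding to the generator `α`). -/
def XX : TruncAlg := gen false
/-- The variable `Y` (corresponding to the generator `β`). -/
def YY : TruncAlg := gen true

theorem cube_eq_zero (i j k : Bool) : gen i * gen j * gen k = 0 := by
  have h := RingQuot.mkRingHom_rel (r := cubeRel)
    (x := FreeAlgebra.ι ℤ i * FreeAlgebra.ι ℤ j * FreeAlgebra.ι ℤ k) (y := 0)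
    ⟨⟨i, j, k, rfl⟩, rfl⟩
  simpa [gen, map_mul] using h

/-- `1 + gen i` as a unit of the truncated algebra, with inverse `1 - gen i + (gen i)²`. -/
def oneAddGen (i : Bool) : TruncAlgˣ where
  val := 1 + gen i
  inv := 1 - gen i + gen i * gen i
  val_inv := by
    have h := cube_eq_zero i i i
    calc (1 + gen i) * (1 - gen i + gen i * gen i)
        = 1 + gen i * gen i * gen i := by
          rw [add_mul, one_mul, mul_add, mul_sub, mul_one, ← mul_assoc]; abel
      _ = 1 := by rw [h, add_zero]
  inv_val := by
    have h := cube_eq_zero i i i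
    calc (1 - gen i + gen i * gen i) * (1 + gen i)
        = 1 + gen i * gen i * gen i := by
          rw [mul_add, mul_one, add_mul, sub_mul, one_mul]; abel
      _ = 1 := by rw [h, add_zero]

/-- The Magnus expansion homomorphism `M : F → ℤ⟨⟨X,Y⟩⟩` (truncated in degrees ≥ 3),
determined by `M(α) = 1 + X` and `M(β) = 1 + Y`. -/
def Magnus : F →* TruncAlgˣ := FreeGroup.lift fun i => oneAddGen i

/-! Modulo degree 3 the Magnus expansion factors through the Heisenberg group: the map
`M(a,b,c) ↦ 1 + aX + bY + C(a,2)X² + cXY + (ab - c)YX + C(b,2)Y²` is multiplicative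
(Vandermonde's identity for `C(·,2)`) and agrees with `M` on `α` and `β`. In the normal form
`[α,β]^ν α^a β^b` the coordinate `c` is `ab + ν`, so the `XY` and `YX` coefficients become
`ab + ν` and `-ν`. -/

theorem Ring.choose_two_add {R : Type*} [CommRing R] [BinomialRing R] (a b : R) :
    Ring.choose (a + b) 2 = Ring.choose a 2 + Ring.choose b 2 + a * b := by
  rw [Ring.add_choose_eq 2 (Commute.all a b), Finset.Nat.sum_antidiagonal_eq_sum_range_succ_mk]
  simp only [Finset.sum_range_succ, Finset.sum_range_zero, Ring.choose_zero_right,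
    Nat.reduceSub, Ring.choose_one_right]
  ring

theorem cube_eq_zero' (i j k : Bool) : gen i * (gen j * gen k) = 0 := by
  rw [← mul_assoc, cube_eq_zero]

theorem quartic_eq_zero (i j k l : Bool) : gen i * gen j * (gen k * gen l) = 0 := by
  rw [mul_assoc, cube_eq_zero', mul_zero]

def magnusTrunc (a b c : ℤ) : TruncAlg :=
  1 + a • XX + b • YY + Ring.choose a 2 • (XX * XX) + c • (XX * YY) + (a * b - c) • (YY * XX) +
    Ring.choose b 2 • (YY * YY)

theorem magnusTrunc_mul (a b c a' b' c' : ℤ) :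
    magnusTrunc a b c * magnusTrunc a' b' c' =
      magnusTrunc (a + a') (b + b') (c + c' + a * b') := by
  simp only [magnusTrunc, XX, YY, mul_add, add_mul, one_mul, mul_one, smul_mul_assoc,
    mul_smul_comm, cube_eq_zero, cube_eq_zero', quartic_eq_zero, Ring.choose_two_add]
  module

theorem magnusTrunc_sub_linear_mem_span (a b c : ℤ) :
    magnusTrunc a b c - 1 - a • XX - b • YY ∈
      Submodule.span ℤ ({XX * XX, XX * YY, YY * XX, YY * YY} : Set TruncAlg) := by
  have hquadratic : magnusTrunc a b c - 1 - a • XX - b • YY =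
      Ring.choose a 2 • (XX * XX) + c • (XX * YY) + (a * b - c) • (YY * XX) +
        Ring.choose b 2 • (YY * YY) := by
    simp only [magnusTrunc]; abel
  rw [hquadratic]
  refine add_mem (add_mem (add_mem ?_ ?_) ?_) ?_ <;>
    exact Submodule.smul_mem _ _ (Submodule.subset_span (by simp))

theorem magnusTrunc_zero_zero (c : ℤ) : magnusTrunc 0 0 c = 1 + c • (XX * YY - YY * XX) := by
  simp only [magnusTrunc, Ring.choose_zero_succ]
  module

def magnusOfUnit (u : (Matrix (Fin 3) (Fin 3) ℤ)ˣ) : TruncAlg :=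
  magnusTrunc (u.val 0 1) (u.val 1 2) (u.val 0 2)

theorem magnusOfUnit_Munit (a b c : ℤ) : magnusOfUnit (Munit a b c) = magnusTrunc a b c := rfl

def heisMagnus : Heis →* TruncAlg where
  toFun u := magnusOfUnit u
  map_one' := by
    rw [Heis.coe_one, ← Munit_one, magnusOfUnit_Munit]
    simp [magnusTrunc, Ring.choose_zero_succ]
  map_mul' := by
    rintro ⟨_, a, b, c, rfl⟩ ⟨_, a', b', c', rfl⟩
    rw [Subgroup.coe_mul, Munit_mul, magnusOfUnit_Munit, magnusOfUnit_Munit, magnusOfUnit_Munit,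
      magnusTrunc_mul]

theorem coeHom_comp_magnus :
    (Units.coeHom TruncAlg).comp Magnus = heisMagnus.comp (Ψ.codRestrict Heis Ψ_mem) := by
  have hchoose : Ring.choose (1 : ℤ) 2 = 0 := by simpa using Ring.choose_natCast (R := ℤ) 1 2
  refine FreeGroup.ext_hom _ _ fun i => ?_
  cases i <;> simp [Magnus, Ψ, heisMagnus, magnusOfUnit_Munit, magnusTrunc, oneAddGen, XX, YY,
    Ring.choose_zero_succ, hchoose]

theorem Ψ_eq_Munit (g : F) : Ψ g = Munit (aF g) (bF g) (aF g * bF g + νF g) := by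
  obtain ⟨a, b, c, h⟩ := Ψ_mem g
  have ha : aF g = a := congrArg (fun u => u.val 0 1) h
  have hb : bF g = b := congrArg (fun u => u.val 1 2) h
  have hν : νF g = c - a * b := by
    rw [← ha, ← hb]; exact congrArg (fun u => u.val 0 2 - aF g * bF g) h
  rw [h, ha, hb, hν]
  exact Munit_congr rfl rfl (by ring)

theorem val_magnus (g : F) :
    (Magnus g : TruncAlg) = magnusTrunc (aF g) (bF g) (aF g * bF g + νF g) := by
  rw [← magnusOfUnit_Munit, ← Ψ_eq_Munit]
  exact DFunLike.congr_fun coeHom_comp_magnus g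

/-- under the Magnus expansion `M` (with `M(α) = 1 + X`, `M(β) = 1 + Y`,
computed in ℤ⟨X,Y⟩ truncated in degrees ≥ 3, which does not affect coefficients in
degrees ≤ 2), for any `g ∈ F` the coefficient of `X` is `a(g)` and the coefficient of
`Y` is `b(g)`, i.e. `M(g) − 1 − a(g)X − b(g)Y` is a ℤ-combination of the degree-2
monomials; and if `a(g) = b(g) = 0` then the degree-2 part is `ν(g)(XY − YX)`, i.e.
`M(g) = 1 + ν(g)(XY − YX)`. -/
theorem statement_19 (g : F) :
    ((Magnus g : TruncAlgˣ) : TruncAlg) - 1 - aF g • XX - bF g • YY ∈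
      Submodule.span ℤ ({XX * XX, XX * YY, YY * XX, YY * YY} : Set TruncAlg) ∧
    (aF g = 0 → bF g = 0 →
      ((Magnus g : TruncAlgˣ) : TruncAlg) = 1 + νF g • (XX * YY - YY * XX)) := by
  rw [val_magnus]
  refine ⟨magnusTrunc_sub_linear_mem_span _ _ _, fun ha hb => ?_⟩
  rw [ha, hb, magnusTrunc_zero_zero, zero_mul, zero_add]

end
end
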